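/- Frieze–Kannan decomposition: There is an absolute constant C such that the following holds. Let ε > 0 and let G be an edge-weighted graph on a finite nonempty vertex set V with all edge weights in [−1,1]. Then there exist k ≤ C·ε^{-2}, subsets S₁,…,S_k, T₁,…,T_k ⊆ V, and c₁,…,c_k ∈ [−1,1] such that d_□(G, d(G) + c₁·K_{S₁,T₁} + ⋯ + c_k·K_{S_k,T_k}) ≤ ε. -/
import Mathlib


open Finset

/-- Sum of the weights of a weighted graph over the ordered pairs in `U × W`. -/
def eWeight {V : Type} (G : V → V → ℝ) (U W : Finset V) : ℝ :=
  ∑ x ∈ U, ∑ y ∈ W, G x y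

/-- Cut metric between two weighted graphs on the same vertex set `V`:
`max_{U, W ⊆ V} |e_{G₁}(U,W) - e_{G₂}(U,W)| / |V|²`. -/
noncomputable def cutDist {V : Type} [Fintype V] [DecidableEq V] (G₁ G₂ : V → V → ℝ) : ℝ :=
  ((univ : Finset V).powerset ×ˢ (univ : Finset V).powerset).sup'
    (((univ : Finset V).powerset_nonempty).product ((univ : Finset V).powerset_nonempty))
    fun p => |eWeight G₁ p.1 p.2 - eWeight G₂ p.1 p.2| / (Fintype.card V : ℝ) ^ 2

/-- The average edge weight `d(G)` of a weighted graph. -/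
noncomputable def avgWeight {V : Type} [Fintype V] (G : V → V → ℝ) : ℝ :=
  (∑ x : V, ∑ y : V, G x y) / (Fintype.card V : ℝ) ^ 2

/-- The weighted graph `K_{S,T}`, with `K_{S,T}(x,y) = 1_S(x) 1_T(y) + 1_T(x) 1_S(y)`. -/
def weightedK {V : Type} [DecidableEq V] (S T : Finset V) : V → V → ℝ :=
  fun x y => (if x ∈ S then (1 : ℝ) else 0) * (if y ∈ T then (1 : ℝ) else 0) +
    (if x ∈ T then (1 : ℝ) else 0) * (if y ∈ S then (1 : ℝ) else 0)

lemma ind_sum {V : Type} [Fintype V] [DecidableEq V] (f : V → V → ℝ) (U W : Finset V) :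
    ∑ x : V, ∑ y : V, f x y * ((if x ∈ U then (1:ℝ) else 0) * (if y ∈ W then (1:ℝ) else 0))
      = eWeight f U W := by
  simp only [eWeight, mul_ite, mul_one, mul_zero, ite_mul, one_mul, zero_mul]
  have : ∀ x : V, (∑ y : V, if y ∈ W then if x ∈ U then f x y else 0 else 0)
      = if x ∈ U then ∑ y ∈ W, f x y else 0 := by
    intro x
    by_cases hx : x ∈ U <;> simp [hx, Finset.sum_ite_mem]
  simp only [this, Finset.sum_ite_mem, Finset.univ_inter]

lemma eWeight_swap {V : Type} (f : V → V → ℝ) (hf : ∀ x y, f x y = f y x) (U W : Finset V) :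
    eWeight f W U = eWeight f U W := by
  rw [eWeight, Finset.sum_comm, eWeight]
  exact Finset.sum_congr rfl fun x _ => Finset.sum_congr rfl fun y _ => hf y x

lemma inner_K {V : Type} [Fintype V] [DecidableEq V] (f : V → V → ℝ)
    (hf : ∀ x y, f x y = f y x) (U W : Finset V) :
    ∑ x : V, ∑ y : V, f x y * weightedK U W x y = 2 * eWeight f U W := by
  simp only [weightedK, mul_add, Finset.sum_add_distrib]
  rw [ind_sum, ind_sum, eWeight_swap f hf, two_mul]

lemma eWeight_sub_mul {V : Type} (f g : V → V → ℝ) (c : ℝ) (U W : Finset V) :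
    eWeight (fun x y => f x y - c * g x y) U W = eWeight f U W - c * eWeight g U W := by
  simp [eWeight, Finset.sum_sub_distrib, Finset.mul_sum]

lemma fk_key {V : Type} [Fintype V] [DecidableEq V] (ε : ℝ) (hε : 0 < ε) :
    ∀ m : ℕ, ∀ f : V → V → ℝ, (∀ x y, f x y = f y x) →
    (∑ x : V, ∑ y : V, f x y ^ 2) ≤ m * (ε ^ 2 * (Fintype.card V : ℝ) ^ 2) →
    ∃ (k : ℕ) (S T : Fin k → Finset V) (c : Fin k → ℝ),
      k ≤ m ∧ (∀ i, |c i| ≤ ε / 2) ∧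
      ∀ U W : Finset V,
        |eWeight f U W - ∑ i, c i * eWeight (weightedK (S i) (T i)) U W|
          ≤ ε * (Fintype.card V : ℝ) ^ 2 := by
  intro m
  induction m with
  | zero =>
    intro f hsym he
    have hf0 : ∀ x y : V, f x y = 0 := by
      have h0 : (∑ x : V, ∑ y : V, f x y ^ 2) = 0 := by
        refine le_antisymm (by simpa using he) ?_
        positivity
      intro x y
      have h1 := (Finset.sum_eq_zero_iff_of_nonneg (fun x _ => by positivity)).1 h0 x
        (Finset.mem_univ x)
      have h2 := (Finset.sum_eq_zero_iff_of_nonneg (fun y _ => by positivity)).1 h1 y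
        (Finset.mem_univ y)
      exact pow_eq_zero_iff (n := 2) (by norm_num) |>.1 h2
    refine ⟨0, Fin.elim0, Fin.elim0, Fin.elim0, le_refl _, fun i => i.elim0, ?_⟩
    intro U W
    have : eWeight f U W = 0 := by simp [eWeight, hf0]
    simp [this]
    positivity
  | succ m ih =>
    intro f hsym he
    set N : ℝ := (Fintype.card V : ℝ) ^ 2 with hN
    by_cases hd : ∀ U W : Finset V, |eWeight f U W| ≤ ε * N
    · refine ⟨0, Fin.elim0, Fin.elim0, Fin.elim0, by omega, fun i => i.elim0, ?_⟩
      intro U W; simpa using hd U W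
    push_neg at hd
    obtain ⟨U, W, hUW⟩ := hd
    set e := eWeight f U W with hedef
    set c₀ : ℝ := if 0 ≤ e then ε / 2 else -(ε / 2) with hc₀
    set K := weightedK U W with hK
    have hc₀e : c₀ * e = (ε / 2) * |e| := by
      rw [hc₀]; split_ifs with h
      · rw [abs_of_nonneg h]
      · rw [abs_of_neg (lt_of_not_ge h)]; ring
    have hc₀sq : c₀ ^ 2 = ε ^ 2 / 4 := by
      rw [hc₀]; split_ifs <;> ring
    have hKsymm : ∀ x y, K x y = K y x := by
      intro x y; simp only [hK, weightedK]; ring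
    have hKbound : ∀ x y, K x y ^ 2 ≤ 4 := by
      intro x y
      have h1 : (0:ℝ) ≤ K x y := by
        simp only [hK, weightedK]; positivity
      have h2 : K x y ≤ 2 := by
        simp only [hK, weightedK]
        have : ∀ (p q : Prop) [Decidable p] [Decidable q],
            (if p then (1:ℝ) else 0) * (if q then (1:ℝ) else 0) ≤ 1 := by
          intro p q _ _; split_ifs <;> norm_num
        calc _ ≤ (1:ℝ) + 1 := add_le_add (this _ _) (this _ _)
        _ = 2 := by norm_num
      nlinarith
    have hKsq : ∑ x : V, ∑ y : V, K x y ^ 2 ≤ 4 * N := by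
      calc ∑ x : V, ∑ y : V, K x y ^ 2 ≤ ∑ x : V, ∑ y : V, (4:ℝ) :=
        Finset.sum_le_sum fun x _ => Finset.sum_le_sum fun y _ => hKbound x y
      _ = 4 * N := by
        simp [hN, Finset.sum_const, Finset.card_univ]; ring
    set f' : V → V → ℝ := fun x y => f x y - c₀ * K x y with hf'
    have hsym' : ∀ x y, f' x y = f' y x := by
      intro x y; simp only [hf', hsym x y, hKsymm x y]
    have hinner : ∑ x : V, ∑ y : V, f x y * K x y = 2 * e := inner_K f hsym U W
    have he' : (∑ x : V, ∑ y : V, f' x y ^ 2) ≤ m * (ε ^ 2 * N) := by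
      have hexp : (∑ x : V, ∑ y : V, f' x y ^ 2)
          = (∑ x : V, ∑ y : V, f x y ^ 2) - 2 * c₀ * (∑ x : V, ∑ y : V, f x y * K x y)
            + c₀ ^ 2 * (∑ x : V, ∑ y : V, K x y ^ 2) := by
        have hpt : ∀ x y : V, (f x y - c₀ * K x y) ^ 2
            = f x y ^ 2 - 2 * c₀ * (f x y * K x y) + c₀ ^ 2 * K x y ^ 2 := fun x y => by ring
        simp only [hf', hpt, Finset.sum_add_distrib, Finset.sum_sub_distrib, Finset.mul_sum]
      rw [hexp, hinner]
      have h1 : ε * N ≤ |e| := le_of_lt hUW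
      have h2 : c₀ ^ 2 * (∑ x : V, ∑ y : V, K x y ^ 2) ≤ ε ^ 2 * N := by
        rw [hc₀sq]
        calc ε ^ 2 / 4 * (∑ x : V, ∑ y : V, K x y ^ 2) ≤ ε ^ 2 / 4 * (4 * N) := by
              apply mul_le_mul_of_nonneg_left hKsq; positivity
        _ = ε ^ 2 * N := by ring
      have h3 : 2 * c₀ * (2 * e) = 2 * ε * |e| := by
        have : 2 * c₀ * (2 * e) = 4 * (c₀ * e) := by ring
        rw [this, hc₀e]; ring
      rw [h3]
      have h4 : 2 * ε * (ε * N) ≤ 2 * ε * |e| := by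
        apply mul_le_mul_of_nonneg_left h1; positivity
      have h5 : 2 * ε * (ε * N) = 2 * (ε ^ 2 * N) := by ring
      push_cast at he ⊢
      linarith
    obtain ⟨k, S, T, c, hk, hc, hmain⟩ := ih f' hsym' he'
    refine ⟨k + 1, Fin.cons U S, Fin.cons W T, Fin.cons c₀ c, by omega, ?_, ?_⟩
    · intro i
      refine Fin.cases ?_ ?_ i
      · simp only [Fin.cons_zero, hc₀]; split_ifs
        · rw [abs_of_nonneg (by positivity)]
        · rw [abs_neg, abs_of_nonneg (by positivity)]
      · intro j; simpa using hc j
    · intro U' W'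
      have hsum : ∑ i : Fin (k+1), (Fin.cons c₀ c : Fin (k+1) → ℝ) i *
            eWeight (weightedK ((Fin.cons U S : Fin (k+1) → Finset V) i)
              ((Fin.cons W T : Fin (k+1) → Finset V) i)) U' W'
          = c₀ * eWeight K U' W' + ∑ i : Fin k, c i * eWeight (weightedK (S i) (T i)) U' W' := by
        rw [Fin.sum_univ_succ]; simp [hK]
      rw [hsum]
      have := hmain U' W'
      rw [hf'] at this
      rw [eWeight_sub_mul] at this
      calc |eWeight f U' W' - (c₀ * eWeight K U' W'
            + ∑ i : Fin k, c i * eWeight (weightedK (S i) (T i)) U' W')|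
          = |eWeight f U' W' - c₀ * eWeight K U' W'
            - ∑ i : Fin k, c i * eWeight (weightedK (S i) (T i)) U' W'| := by ring_nf
      _ ≤ ε * N := this

lemma triple_sum_comm {α β γ : Type} (s : Finset α) (t : Finset β) (u : Finset γ)
    (g : α → β → γ → ℝ) :
    ∑ x ∈ s, ∑ y ∈ t, ∑ i ∈ u, g x y i = ∑ i ∈ u, ∑ x ∈ s, ∑ y ∈ t, g x y i := by
  calc ∑ x ∈ s, ∑ y ∈ t, ∑ i ∈ u, g x y i
      = ∑ x ∈ s, ∑ i ∈ u, ∑ y ∈ t, g x y i :=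
        Finset.sum_congr rfl fun x _ => Finset.sum_comm
  _ = ∑ i ∈ u, ∑ x ∈ s, ∑ y ∈ t, g x y i := Finset.sum_comm

lemma eWeight_congr {V : Type} {f g : V → V → ℝ} (h : ∀ x y, f x y = g x y) (U W : Finset V) :
    eWeight f U W = eWeight g U W := by
  simp only [eWeight, h]

lemma eWeight_sub {V : Type} (f g : V → V → ℝ) (U W : Finset V) :
    eWeight (fun x y => f x y - g x y) U W = eWeight f U W - eWeight g U W := by
  simp [eWeight, Finset.sum_sub_distrib]

lemma eWeight_sum {V : Type} {k : ℕ} (g : Fin k → V → V → ℝ) (U W : Finset V) :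
    eWeight (fun x y => ∑ i, g i x y) U W = ∑ i, eWeight (g i) U W := by
  simp only [eWeight]
  exact triple_sum_comm _ _ _ _

lemma eWeight_smul {V : Type} (c : ℝ) (g : V → V → ℝ) (U W : Finset V) :
    eWeight (fun x y => c * g x y) U W = c * eWeight g U W := by
  simp [eWeight, Finset.mul_sum]


/-- Frieze–Kannan decomposition: there is an absolute constant `C` such that every weighted
graph with weights in `[-1,1]` can be approximated in cut metric, to within `ε`, by
`d(G) + c₁ K_{S₁,T₁} + ⋯ + c_k K_{S_k,T_k}` with `k ≤ C ε⁻²` and `cᵢ ∈ [-1,1]`. -/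
theorem frieze_kannan_decomposition :
    ∃ C : ℝ, 0 < C ∧
      ∀ (ε : ℝ), 0 < ε →
      ∀ (V : Type) [Fintype V] [DecidableEq V], Nonempty V →
      ∀ (G : V → V → ℝ), (∀ x y, G x y = G y x) →
        (∀ x y, G x y ∈ Set.Icc (-1 : ℝ) 1) →
        ∃ (k : ℕ) (S T : Fin k → Finset V) (c : Fin k → ℝ),
          (k : ℝ) ≤ C * ε ^ (-2 : ℤ) ∧ (∀ i, c i ∈ Set.Icc (-1 : ℝ) 1) ∧
          cutDist G
            (fun x y => avgWeight G + ∑ i : Fin k, c i * weightedK (S i) (T i) x y) ≤ ε := by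
  refine ⟨8, by norm_num, ?_⟩
  intro ε hε V _ _ hV G hsym hbound
  have hn : 0 < Fintype.card V := Fintype.card_pos
  set N : ℝ := (Fintype.card V : ℝ) ^ 2 with hN
  have hNpos : 0 < N := by positivity
  have hεinv : (8:ℝ) * ε ^ (-2 : ℤ) = 8 / ε ^ 2 := by
    rw [zpow_neg, div_eq_mul_inv]
    norm_num
  -- bound on the average
  have havgsum : |∑ x : V, ∑ y : V, G x y| ≤ N := by
    calc |∑ x : V, ∑ y : V, G x y| ≤ ∑ x : V, ∑ y : V, |G x y| := by
          refine (Finset.abs_sum_le_sum_abs _ _).trans ?_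
          exact Finset.sum_le_sum fun x _ => Finset.abs_sum_le_sum_abs _ _
    _ ≤ ∑ x : V, ∑ y : V, (1:ℝ) := by
          refine Finset.sum_le_sum fun x _ => Finset.sum_le_sum fun y _ => ?_
          exact abs_le.2 ⟨(hbound x y).1, (hbound x y).2⟩
    _ = N := by simp [hN, Finset.card_univ]; ring
  have havg : |avgWeight G| ≤ 1 := by
    rw [avgWeight, abs_div, abs_of_pos hNpos, div_le_one hNpos]
    exact havgsum
  -- the deviation from the average
  set f : V → V → ℝ := fun x y => G x y - avgWeight G with hf
  have hsymf : ∀ x y, f x y = f y x := fun x y => by simp only [hf, hsym x y]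
  have hfbound : ∀ x y, f x y ^ 2 ≤ 4 := by
    intro x y
    have h1 : |f x y| ≤ 2 := by
      simp only [hf]
      calc |G x y - avgWeight G| ≤ |G x y| + |avgWeight G| := abs_sub _ _
      _ ≤ 1 + 1 := add_le_add (abs_le.2 ⟨(hbound x y).1, (hbound x y).2⟩) havg
      _ = 2 := by norm_num
    have := abs_le.1 h1
    nlinarith
  have henergy : (∑ x : V, ∑ y : V, f x y ^ 2) ≤ 4 * N := by
    calc (∑ x : V, ∑ y : V, f x y ^ 2) ≤ ∑ x : V, ∑ y : V, (4:ℝ) :=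
      Finset.sum_le_sum fun x _ => Finset.sum_le_sum fun y _ => hfbound x y
    _ = 4 * N := by simp [hN, Finset.card_univ]; ring
  -- comparison lemma: rewrite the cut distance difference
  have hcomp : ∀ (k : ℕ) (S T : Fin k → Finset V) (c : Fin k → ℝ) (U W : Finset V),
      eWeight G U W - eWeight (fun x y => avgWeight G + ∑ i, c i * weightedK (S i) (T i) x y) U W
        = eWeight f U W - ∑ i, c i * eWeight (weightedK (S i) (T i)) U W := by
    intro k S T c U W
    have hpt : ∀ x y : V,
        G x y - (avgWeight G + ∑ i, c i * weightedK (S i) (T i) x y)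
          = f x y - ∑ i, c i * weightedK (S i) (T i) x y := by
      intro x y; simp only [hf]; ring
    calc eWeight G U W
          - eWeight (fun x y => avgWeight G + ∑ i, c i * weightedK (S i) (T i) x y) U W
        = eWeight (fun x y => G x y
            - (avgWeight G + ∑ i, c i * weightedK (S i) (T i) x y)) U W :=
          (eWeight_sub _ _ U W).symm
    _ = eWeight (fun x y => f x y - ∑ i, c i * weightedK (S i) (T i) x y) U W :=
          eWeight_congr hpt U W
    _ = eWeight f U W - eWeight (fun x y => ∑ i, c i * weightedK (S i) (T i) x y) U W :=
          eWeight_sub _ _ U W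
    _ = eWeight f U W - ∑ i, c i * eWeight (weightedK (S i) (T i)) U W := by
          rw [eWeight_sum]
          congr 1
          exact Finset.sum_congr rfl fun i _ => eWeight_smul _ _ U W
  by_cases hε2 : ε ≤ 2
  · -- main case
    set m : ℕ := ⌈(4:ℝ) / ε ^ 2⌉₊ with hm
    have hmge : (4:ℝ) / ε ^ 2 ≤ m := Nat.le_ceil _
    have hen : (∑ x : V, ∑ y : V, f x y ^ 2) ≤ m * (ε ^ 2 * N) := by
      refine henergy.trans ?_
      have : (4:ℝ) * N = (4 / ε ^ 2) * (ε ^ 2 * N) := by field_simp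
      rw [this]
      apply mul_le_mul_of_nonneg_right hmge (by positivity)
    obtain ⟨k, S, T, c, hk, hc, hmain⟩ := fk_key ε hε m f hsymf hen
    refine ⟨k, S, T, c, ?_, ?_, ?_⟩
    · rw [hεinv]
      have h1 : (k:ℝ) ≤ m := by exact_mod_cast hk
      have h2 : (m:ℝ) < 4 / ε ^ 2 + 1 := Nat.ceil_lt_add_one (by positivity)
      have h3 : (1:ℝ) ≤ 4 / ε ^ 2 := by
        rw [le_div_iff₀ (by positivity)]
        nlinarith
      have h4 : (8:ℝ) / ε ^ 2 = 2 * (4 / ε ^ 2) := by ring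
      linarith
    · intro i
      have := hc i
      have h1 : ε / 2 ≤ 1 := by linarith
      exact abs_le.1 (this.trans h1)
    · rw [cutDist]
      apply Finset.sup'_le
      intro p hp
      rw [div_le_iff₀ hNpos]
      rw [hcomp k S T c p.1 p.2]
      exact hmain p.1 p.2
  · -- trivial case: ε > 2, take k = 0
    push_neg at hε2
    refine ⟨0, Fin.elim0, Fin.elim0, Fin.elim0, by norm_num; positivity, fun i => i.elim0, ?_⟩
    rw [cutDist]
    apply Finset.sup'_le
    intro p hp
    rw [div_le_iff₀ hNpos]
    rw [hcomp 0 Fin.elim0 Fin.elim0 Fin.elim0 p.1 p.2]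
    simp only [Finset.univ_eq_empty, Finset.sum_empty, sub_zero]
    calc |eWeight f p.1 p.2| ≤ ∑ x ∈ p.1, ∑ y ∈ p.2, |f x y| := by
          refine (Finset.abs_sum_le_sum_abs _ _).trans ?_
          exact Finset.sum_le_sum fun x _ => Finset.abs_sum_le_sum_abs _ _
    _ ≤ ∑ x ∈ p.1, ∑ y ∈ p.2, (2:ℝ) := by
          refine Finset.sum_le_sum fun x _ => Finset.sum_le_sum fun y _ => ?_
          simp only [hf]
          calc |G x y - avgWeight G| ≤ |G x y| + |avgWeight G| := abs_sub _ _
          _ ≤ 1 + 1 := add_le_add (abs_le.2 ⟨(hbound x y).1, (hbound x y).2⟩) havg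
          _ = 2 := by norm_num
    _ ≤ 2 * N := by
          simp only [Finset.sum_const, nsmul_eq_mul, hN]
          have h1 : (p.1.card : ℝ) ≤ Fintype.card V := by
            exact_mod_cast Finset.card_le_univ p.1
          have h2 : (p.2.card : ℝ) ≤ Fintype.card V := by
            exact_mod_cast Finset.card_le_univ p.2
          have h0 : (0:ℝ) ≤ (p.2.card : ℝ) := by positivity
          have h5 : (0:ℝ) ≤ (Fintype.card V : ℝ) := by positivity
          nlinarith [mul_le_mul h1 h2 h0 h5]
    _ ≤ ε * N := by nlinarith
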